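/- arXiv:1410.7637 — 3 statements merged into one kernel-verified Lean document; each statement's English description precedes it below -/
import Mathlib

section
/- Let $n \ge 10$. Then $r(T_n'', T_n') = 2n-5$, where $T_n'$ is the unique tree on $n$ vertices with maximum degree $n-2$ (the broom $S(n-3,1)$) and $T_n''$ is defined below. -/
open SimpleGraph

/-- `Contains G H` : the graph `G` contains a copy of `H` as a subgraph. -/
def Contains {V W : Type*} (G : SimpleGraph V) (H : SimpleGraph W) : Prop :=
  ∃ f : W ↪ V, ∀ a b, H.Adj a b → G.Adj (f a) (f b)

/-- The Ramsey number `r(G₁,G₂)`: the smallest positive `p` such that every graph on `p`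
vertices contains a copy of `G₁` or its complement contains a copy of `G₂`. -/
noncomputable def ramseyNumber {α β : Type*} (G₁ : SimpleGraph α) (G₂ : SimpleGraph β) : ℕ :=
  sInf {p | 0 < p ∧ ∀ G : SimpleGraph (Fin p), Contains G G₁ ∨ Contains Gᶜ G₂}

/-- The Turán/extremal number `ex(p; L)`: maximal number of edges of a graph on `p`
vertices with no copy of `L`. -/
noncomputable def exNum {W : Type*} (p : ℕ) (L : SimpleGraph W) : ℕ :=
  sSup {m | ∃ G : SimpleGraph (Fin p), ¬ Contains G L ∧ G.edgeSet.ncard = m}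

/-- The maximum degree of a graph. -/
noncomputable def maxDeg {α : Type*} (G : SimpleGraph α) : ℕ :=
  sSup {d | ∃ v, d = (G.neighborSet v).ncard}

/-- The star `K_{1,m-1}` on `m` vertices, centered at `0`. -/
def starGraph (m : ℕ) : SimpleGraph (Fin m) :=
  SimpleGraph.fromRel (fun i _ => (i : ℕ) = 0)

/-- The double star `S(n₁,n₂)`: vertex `0` is adjacent to `1` and to the `n₁` vertices
`2,…,n₁+1`; vertex `1` is adjacent to the `n₂` vertices `n₁+2,…,n₁+n₂+1`. -/
def doubleStar (n₁ n₂ : ℕ) : SimpleGraph (Fin (n₁ + n₂ + 2)) :=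
  SimpleGraph.fromRel (fun i j =>
    ((i : ℕ) = 0 ∧ (j : ℕ) = 1) ∨
    ((i : ℕ) = 0 ∧ 2 ≤ (j : ℕ) ∧ (j : ℕ) ≤ n₁ + 1) ∨
    ((i : ℕ) = 1 ∧ n₁ + 2 ≤ (j : ℕ)))

/-- The tree `Tₙ''` with edges `v₀vᵢ (1 ≤ i ≤ n-4)`, `v₁v_{n-3}`, `v₁v_{n-2}`, `v₂v_{n-1}`. -/
def treeDD (n : ℕ) : SimpleGraph (Fin n) :=
  SimpleGraph.fromRel (fun i j =>
    ((i : ℕ) = 0 ∧ 1 ≤ (j : ℕ) ∧ (j : ℕ) ≤ n - 4) ∨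
    ((i : ℕ) = 1 ∧ ((j : ℕ) = n - 3 ∨ (j : ℕ) = n - 2)) ∨
    ((i : ℕ) = 2 ∧ (j : ℕ) = n - 1))

/-- The tree `Tₙ'''` with edges `v₀vᵢ (1 ≤ i ≤ n-4)`, `v₁v_{n-3}`, `v₂v_{n-2}`, `v₃v_{n-1}`. -/
def treeDDD (n : ℕ) : SimpleGraph (Fin n) :=
  SimpleGraph.fromRel (fun i j =>
    ((i : ℕ) = 0 ∧ 1 ≤ (j : ℕ) ∧ (j : ℕ) ≤ n - 4) ∨
    ((i : ℕ) = 1 ∧ (j : ℕ) = n - 3) ∨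
    ((i : ℕ) = 2 ∧ (j : ℕ) = n - 2) ∨
    ((i : ℕ) = 3 ∧ (j : ℕ) = n - 1))

/-- The tree `Tₙ¹` with edges `v₀vᵢ (1 ≤ i ≤ n-3)`, `v_{n-4}v_{n-2}`, `v_{n-3}v_{n-1}`. -/
def treeT1 (n : ℕ) : SimpleGraph (Fin n) :=
  SimpleGraph.fromRel (fun i j =>
    ((i : ℕ) = 0 ∧ 1 ≤ (j : ℕ) ∧ (j : ℕ) ≤ n - 3) ∨
    ((i : ℕ) = n - 4 ∧ (j : ℕ) = n - 2) ∨
    ((i : ℕ) = n - 3 ∧ (j : ℕ) = n - 1))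

/-- The tree `Tₙ²` with edges `v₀vᵢ (1 ≤ i ≤ n-3)`, `v_{n-3}v_{n-2}`, `v_{n-3}v_{n-1}`. -/
def treeT2 (n : ℕ) : SimpleGraph (Fin n) :=
  SimpleGraph.fromRel (fun i j =>
    ((i : ℕ) = 0 ∧ 1 ≤ (j : ℕ) ∧ (j : ℕ) ≤ n - 3) ∨
    ((i : ℕ) = n - 3 ∧ ((j : ℕ) = n - 2 ∨ (j : ℕ) = n - 1)))

/-!
Lower bound: split `2n - 6` vertices into two cliques of at most `n - 3` vertices. The tree
`Tₙ''` is connected on `n` vertices, so it lies in neither clique, and the complement is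
bipartite with parts of size at most `n - 3`, too small for the broom's vertex of degree `n - 2`.

Upper bound: let `G` have `2n - 5` vertices and no broom in `Gᶜ`. If some `o` has `Gᶜ`-degree
at least `n - 2`, a broom centred at `o` is avoided only if the `Gᶜ`-neighbours of `o` are
`G`-adjacent to every vertex outside `N_{Gᶜ}[o]`, or to every vertex other than `o` when the degree
is larger; either way `G` contains `K_{4,n-4}`, which contains `Tₙ''`. Otherwise `G` has minimum
degree at least `n - 3` and `Tₙ''` is grown greedily from any vertex `x`. The only delicate case is
`deg x ≤ n - 2` with every neighbour of `x` adjacent to at most one vertex outside `N[x]`: as every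
vertex outside `N[x]` still has a neighbour in `N(x)`, the pendant edge `z c` can then be chosen
with `c` outside `N[x]`, so that `c` uses up none of the leaves of `x`.
-/

open Finset

section Embedding

variable {V W : Type*} {G : SimpleGraph V}

theorem contains_iff_isContained {H : SimpleGraph W} :
    Contains G H ↔ H ⊑ G :=
  isContained_iff_exists_le_comap.symm

theorem contains_fromRel_of_nodup {m : ℕ} {r : Fin m → Fin m → Prop} (l : List V)
    (hl : l.Nodup) (hlen : l.length = m)
    (hadj : ∀ i j : Fin m, r i j → G.Adj (l[i.1]'(hlen ▸ i.2)) (l[j.1]'(hlen ▸ j.2))) :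
    Contains G (SimpleGraph.fromRel r) := by
  subst hlen
  refine ⟨⟨fun i => l[i.1], fun i j h => Fin.ext (hl.getElem_inj_iff.mp h)⟩, ?_⟩
  rintro i j ⟨-, hij | hji⟩
  · exact hadj i j hij
  · exact (hadj j i hji).symm

section Finite

variable [Fintype V] [DecidableEq V] [DecidableRel G.Adj]

theorem contains_treeDD {n : ℕ} (hn : 6 ≤ n) {x y z a b c : V}
    (hnodup : [x, y, z, a, b, c].Nodup) (hxy : G.Adj x y) (hxz : G.Adj x z)
    (hya : G.Adj y a) (hyb : G.Adj y b) (hzc : G.Adj z c)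
    (hleaves : n - 6 ≤ #(G.neighborFinset x \ {y, z, a, b, c})) :
    Contains G (treeDD n) := by
  obtain ⟨m, rfl⟩ := Nat.exists_eq_add_of_le' hn
  rw [Nat.add_sub_cancel] at hleaves
  obtain ⟨L, hL, rfl⟩ := exists_subset_card_eq hleaves
  have hLx : ∀ v ∈ L, G.Adj x v ∧ v ∉ ({y, z, a, b, c} : Finset V) := fun v hv => by
    simpa using hL hv
  -- the `i`-th entry of the list is the image of `vᵢ`
  refine contains_fromRel_of_nodup ([x, y, z] ++ L.toList ++ [a, b, c]) ?_ (by simp) ?_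
  · have hxL : x ∉ L := fun h => (hLx x h).1.ne rfl
    have hL' : ∀ v ∈ ({y, z, a, b, c} : Finset V), v ∉ L := fun v hv h => (hLx v h).2 hv
    simp only [mem_insert, mem_singleton, forall_eq_or_imp, forall_eq] at hL'
    simp_all [List.nodup_append, nodup_toList]
  · rintro ⟨i, hi⟩ ⟨j, hj⟩ h
    dsimp only at h
    rcases h with ⟨rfl, hj1, hj2⟩ | ⟨rfl, rfl | rfl⟩ | ⟨rfl, rfl⟩
    · rcases (by omega : j = 1 ∨ j = 2 ∨ 3 ≤ j) with rfl | rfl | h3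
      · simpa
      · simpa
      obtain ⟨k, rfl⟩ := Nat.exists_eq_add_of_le' h3
      simp only [List.cons_append, List.nil_append, List.getElem_cons_succ, List.getElem_cons_zero]
      rw [List.getElem_append_left (by simp; omega)]
      exact (hLx _ (mem_toList.mp (List.getElem_mem _))).1
    all_goals simp [*]

theorem contains_doubleStar {k : ℕ} {c u w : V} (hwc : w ≠ c) (hcu : G.Adj c u)
    (huw : G.Adj u w) (hleaves : k ≤ #(G.neighborFinset c \ {u, w})) :
    Contains G (doubleStar k 1) := by
  obtain ⟨L, hL, rfl⟩ := exists_subset_card_eq hleaves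
  have hLc : ∀ v ∈ L, G.Adj c v ∧ v ∉ ({u, w} : Finset V) := fun v hv => by
    simpa using hL hv
  refine contains_fromRel_of_nodup ([c, u] ++ L.toList ++ [w]) ?_ (by simp) ?_
  · have hcL : c ∉ L := fun h => (hLc c h).1.ne rfl
    have huL : u ∉ L := fun h => (hLc u h).2 (by simp)
    have hwL : w ∉ L := fun h => (hLc w h).2 (by simp)
    simp_all [List.nodup_append, nodup_toList, hcu.ne, huw.ne, hwc.symm]
  · rintro ⟨i, hi⟩ ⟨j, hj⟩ h
    dsimp only at h
    rcases h with ⟨rfl, rfl⟩ | ⟨rfl, hj2, hj3⟩ | ⟨rfl, hj2⟩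
    · simpa
    · obtain ⟨l, rfl⟩ := Nat.exists_eq_add_of_le' hj2
      simp only [List.cons_append, List.nil_append, List.getElem_cons_succ,
        List.getElem_cons_zero]
      rw [List.getElem_append_left (by simp; omega)]
      exact (hLc _ (mem_toList.mp (List.getElem_mem _))).1
    · obtain rfl : j = #L + 2 := by omega
      simpa

end Finite

end Embedding

section UpperBound

variable {V : Type*} [Fintype V] [DecidableEq V] {G : SimpleGraph V} [DecidableRel G.Adj]
  {n : ℕ}

theorem contains_treeDD_of_forall_mem_adj (hn : 6 ≤ n) {A R : Finset V} (hA : 4 ≤ #A)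
    (hR : n - 4 ≤ #R) (hAR : ∀ u ∈ A, ∀ w ∈ R, G.Adj u w) :
    Contains G (treeDD n) := by
  have hne {u w} (hu : u ∈ A) (hw : w ∈ R) : u ≠ w := (hAR u hu w hw).ne
  obtain ⟨x, hx⟩ := card_pos.1 (by omega : 0 < #A)
  obtain ⟨a, ha, hax⟩ := exists_mem_notMem_of_card_lt_card (s := {x}) (t := A)
    (by rw [card_singleton]; omega)
  obtain ⟨b, hb, hbxa⟩ := exists_mem_notMem_of_card_lt_card (s := {x, a}) (t := A)
    (card_le_two.trans_lt (by omega))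
  obtain ⟨c, hc, hcxab⟩ := exists_mem_notMem_of_card_lt_card (s := {x, a, b}) (t := A)
    (card_le_three.trans_lt (by omega))
  obtain ⟨y, hy⟩ := card_pos.1 (by omega : 0 < #R)
  obtain ⟨z, hz, hzy⟩ := exists_mem_notMem_of_card_lt_card (s := {y}) (t := R)
    (by rw [card_singleton]; omega)
  simp only [mem_insert, mem_singleton, not_or] at hax hbxa hcxab hzy
  refine contains_treeDD hn ?_ (hAR x hx y hy) (hAR x hx z hz) (hAR a ha y hy).symm
    (hAR b hb y hy).symm (hAR c hc z hz).symm ?_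
  · simp [hne hx hy, hne hx hz, Ne.symm hax, Ne.symm hbxa.1, Ne.symm hcxab.1, Ne.symm hzy,
      (hne ha hy).symm, (hne hb hy).symm, (hne hc hy).symm, (hne ha hz).symm,
      (hne hb hz).symm, (hne hc hz).symm, Ne.symm hbxa.2, Ne.symm hcxab.2.1, Ne.symm hcxab.2.2]
  · have hsub : R \ {y, z} ⊆ G.neighborFinset x \ {y, z, a, b, c} := fun v hv => by
      simp only [mem_sdiff, mem_insert, mem_singleton, not_or] at hv
      simp [hAR x hx v hv.1, hv.2, (hne ha hv.1).symm, (hne hb hv.1).symm, (hne hc hv.1).symm]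
    have := le_card_sdiff {y, z} R
    have := card_le_card hsub
    have : #({y, z} : Finset V) ≤ 2 := card_le_two
    omega

theorem contains_treeDD_of_cherry (hn : 6 ≤ n) {x y a b : V} (hxy : G.Adj x y)
    (hya : G.Adj y a) (hyb : G.Adj y b) (hab : a ≠ b) (hax : a ≠ x) (hbx : b ≠ x)
    (hdeg : ∀ z, G.Adj x z → 5 ≤ G.degree z)
    (hx : n - 3 ≤ #(G.neighborFinset x \ {a, b})) :
    Contains G (treeDD n) := by
  obtain ⟨z, hz, hzy⟩ := exists_mem_notMem_of_card_lt_card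
    (s := {y}) (t := G.neighborFinset x \ {a, b}) (by simp; omega)
  simp only [mem_sdiff, mem_neighborFinset, mem_insert, mem_singleton, not_or] at hz hzy
  obtain ⟨hxz, hza, hzb⟩ := hz
  obtain ⟨c, hzc, hc⟩ := exists_mem_notMem_of_card_lt_card (s := {x, y, a, b})
    (t := G.neighborFinset z) ((card_le_four).trans_lt (hdeg z hxz))
  simp only [mem_neighborFinset, mem_insert, mem_singleton, not_or] at hzc hc
  obtain ⟨hcx, hcy, hca, hcb⟩ := hc
  refine contains_treeDD hn ?_ hxy hxz hya hyb hzc ?_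
  · simp [hxy.ne, hxz.ne, hax.symm, hbx.symm, Ne.symm hcx, Ne.symm hzy, hya.ne, hyb.ne,
      Ne.symm hcy, hza, hzb, hzc.ne, hab, Ne.symm hca, Ne.symm hcb]
  · have hsub : (G.neighborFinset x \ {a, b}) \ {y, z, c} ⊆
        G.neighborFinset x \ {y, z, a, b, c} := by
      intro v
      simp only [mem_sdiff, mem_insert, mem_singleton]
      tauto
    have := le_card_sdiff {y, z, c} (G.neighborFinset x \ {a, b})
    have := card_le_card hsub
    have : #({y, z, c} : Finset V) ≤ 3 := card_le_three
    omega

theorem contains_treeDD_of_le_degree (hn : 6 ≤ n) {x : V} (hx : n - 1 ≤ G.degree x)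
    (hdeg : ∀ z, G.Adj x z → 5 ≤ G.degree z) :
    Contains G (treeDD n) := by
  obtain ⟨y, hxy⟩ := card_pos.1 ((by omega : 0 < n - 1).trans_le hx)
  rw [mem_neighborFinset] at hxy
  obtain ⟨a, ha, b, hb, hab⟩ := one_lt_card.1 <|
    (by have := hdeg y hxy; omega : 1 < G.degree y - 1).trans_le (pred_card_le_card_erase (a := x))
  simp only [mem_erase, mem_neighborFinset] at ha hb
  refine contains_treeDD_of_cherry hn hxy ha.2 hb.2 hab ha.1 hb.1 hdeg ?_
  have := le_card_sdiff {a, b} (G.neighborFinset x)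
  have : #({a, b} : Finset V) ≤ 2 := card_le_two
  rw [card_neighborFinset_eq_degree] at *
  omega

theorem exists_adj_adj_of_compl_adj (hn : 4 ≤ n) (hV : Fintype.card V = 2 * n - 5)
    (hδ : ∀ v, n - 3 ≤ G.degree v) {x r : V} (hr : Gᶜ.Adj x r) :
    ∃ u, G.Adj x u ∧ G.Adj u r := by
  by_contra! h
  rw [compl_adj] at hr
  have hsub : G.neighborFinset r ⊆ (Gᶜ.neighborFinset x).erase r := by
    intro v hv
    rw [mem_neighborFinset] at hv
    simp only [mem_erase, mem_neighborFinset, compl_adj]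
    exact ⟨hv.ne', ⟨fun hxv => hr.2 (hxv ▸ hv.symm), fun hxv => h v hxv hv.symm⟩⟩
  have := card_le_card hsub
  rw [card_erase_of_mem (by simpa using hr), card_neighborFinset_eq_degree,
    card_neighborFinset_eq_degree, degree_compl, hV] at this
  have := hδ r
  have := hδ x
  omega

theorem contains_treeDD_of_compl_adj (hn : 6 ≤ n) {x y z a b c : V}
    (hx : n - 3 ≤ G.degree x) (hxy : G.Adj x y) (hxz : G.Adj x z) (hxb : G.Adj x b)
    (hya : G.Adj y a) (hyb : G.Adj y b) (hzc : G.Adj z c) (ha : Gᶜ.Adj x a) (hc : Gᶜ.Adj x c)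
    (hzy : z ≠ y) (hzb : z ≠ b) (hca : c ≠ a) :
    Contains G (treeDD n) := by
  rw [compl_adj] at ha hc
  have hne {v w} (hv : G.Adj x v) (hw : ¬G.Adj x w) : v ≠ w := fun h => hw (h ▸ hv)
  refine contains_treeDD hn ?_ hxy hxz hya hyb hzc ?_
  · simp [hxy.ne, hxz.ne, ha.1, hxb.ne, hc.1, Ne.symm hzy, hya.ne, hyb.ne, hzb, hzc.ne,
      Ne.symm hca, hne hxy hc.2, hne hxz ha.2, (hne hxb ha.2).symm, hne hxb hc.2]
  · have hsub : G.neighborFinset x \ {y, z, b} ⊆ G.neighborFinset x \ {y, z, a, b, c} := by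
      intro v
      simp only [mem_sdiff, mem_neighborFinset, mem_insert, mem_singleton]
      rintro ⟨hxv, hv⟩
      refine ⟨hxv, ?_⟩
      rintro (rfl | rfl | rfl | rfl | rfl) <;> tauto
    have := le_card_sdiff {y, z, b} (G.neighborFinset x)
    have := card_le_card hsub
    have : #({y, z, b} : Finset V) ≤ 3 := card_le_three
    rw [card_neighborFinset_eq_degree] at *
    omega

theorem contains_treeDD_of_forall_compl_adj_eq (hn : 7 ≤ n) (hV : Fintype.card V = 2 * n - 5)
    (hδ : ∀ v, n - 3 ≤ G.degree v) {x : V} (hx : G.degree x ≤ n - 2)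
    (huniq : ∀ y a b, G.Adj x y → G.Adj y a → G.Adj y b → Gᶜ.Adj x a → Gᶜ.Adj x b →
      a = b) :
    Contains G (treeDD n) := by
  have hR : n - 4 ≤ Gᶜ.degree x := by rw [degree_compl, hV]; omega
  obtain ⟨a, ha⟩ := card_pos.1 ((by omega : 0 < n - 4).trans_le hR)
  rw [mem_neighborFinset] at ha
  obtain ⟨y, hxy, hya⟩ := exists_adj_adj_of_compl_adj (by omega) hV hδ ha
  obtain ⟨b, hyb, hxb⟩ : ∃ b, G.Adj y b ∧ G.Adj x b := by
    by_contra! h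
    have hsub : G.neighborFinset y ⊆ {x, a} := by
      intro v hv
      rw [mem_neighborFinset] at hv
      by_cases hvx : v = x
      · simp [hvx]
      · have := huniq y v a hxy hv hya ((compl_adj G x v).2 ⟨Ne.symm hvx, h v hv⟩) ha
        simp [this]
    have := card_le_card hsub
    have : #({x, a} : Finset V) ≤ 2 := card_le_two
    have := hδ y
    rw [card_neighborFinset_eq_degree] at *
    omega
  obtain ⟨r₁, hr₁, r₂, hr₂, hr₁₂⟩ := one_lt_card.1 <|
    (by omega : 1 < Gᶜ.degree x - 1).trans_le (pred_card_le_card_erase (a := a))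
  simp only [mem_erase, mem_neighborFinset] at hr₁ hr₂
  obtain ⟨u₁, hxu₁, hu₁r₁⟩ := exists_adj_adj_of_compl_adj (by omega) hV hδ hr₁.2
  obtain ⟨u₂, hxu₂, hu₂r₂⟩ := exists_adj_adj_of_compl_adj (by omega) hV hδ hr₂.2
  have hne_y {u r} (hxu : G.Adj x u) (hur : G.Adj u r) (hr : Gᶜ.Adj x r) (hra : r ≠ a) :
      u ≠ y := by
    rintro rfl
    exact hra (huniq _ _ _ hxu hur hya hr ha)
  by_cases hu₁b : u₁ = b
  · refine contains_treeDD_of_compl_adj (by omega) (hδ x) hxy hxu₂ hxb hya hyb hu₂r₂ ha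
      hr₂.2      (hne_y hxu₂ hu₂r₂ hr₂.2 hr₂.1) (fun hu₂b => ?_) hr₂.1
    subst hu₁b hu₂b
    exact hr₁₂ (huniq _ _ _ hxu₁ hu₁r₁ hu₂r₂ hr₁.2 hr₂.2)
  · exact contains_treeDD_of_compl_adj (by omega) (hδ x) hxy hxu₁ hxb hya hyb hu₁r₁ ha
      hr₁.2 (hne_y hxu₁ hu₁r₁ hr₁.2 hr₁.1) hu₁b hr₁.1

theorem contains_treeDD_of_degree_le (hn : 8 ≤ n) (hV : Fintype.card V = 2 * n - 5)
    (hδ : ∀ v, n - 3 ≤ G.degree v) {x : V} (hx : G.degree x ≤ n - 2) :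
    Contains G (treeDD n) := by
  by_cases huniq :
      ∀ y a b, G.Adj x y → G.Adj y a → G.Adj y b → Gᶜ.Adj x a → Gᶜ.Adj x b → a = b
  · exact contains_treeDD_of_forall_compl_adj_eq (by omega) hV hδ hx huniq
  push Not at huniq
  obtain ⟨y, a, b, hxy, hya, hyb, ha, hb, hab⟩ := huniq
  rw [compl_adj] at ha hb
  refine contains_treeDD_of_cherry (by omega) hxy hya hyb hab (Ne.symm ha.1) (Ne.symm hb.1)
    (fun z _ => (by omega : 5 ≤ n - 3).trans (hδ z)) ?_
  rw [sdiff_eq_self_of_disjoint (by simp [ha.2, hb.2]), card_neighborFinset_eq_degree]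
  exact hδ x

theorem adj_of_not_contains_compl_doubleStar {k : ℕ} (hB : ¬ Contains Gᶜ (doubleStar k 1))
    {c u w : V} (hcu : Gᶜ.Adj c u) (hwc : w ≠ c) (huw : u ≠ w)
    (hk : k ≤ #(Gᶜ.neighborFinset c \ {u, w})) : G.Adj u w := by
  by_contra h
  exact hB (contains_doubleStar hwc hcu ((compl_adj G u w).2 ⟨huw, h⟩) hk)

theorem contains_treeDD_of_le_compl_degree (hn : 6 ≤ n) (hV : Fintype.card V = 2 * n - 5)
    (hB : ¬ Contains Gᶜ (doubleStar (n - 3) 1)) {o : V} (ho : n - 1 ≤ Gᶜ.degree o) :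
    Contains G (treeDD n) := by
  obtain ⟨A, hA, hAcard⟩ := exists_subset_card_eq
    ((by omega : 4 ≤ n - 1).trans (ho.trans_eq (card_neighborFinset_eq_degree ..).symm))
  refine contains_treeDD_of_forall_mem_adj (by omega) hAcard.ge (R := (insert o A)ᶜ) ?_
    fun u hu w hw => ?_
  · rw [card_compl, card_insert_of_notMem fun h => by simpa using hA h, hAcard, hV]
    omega
  · simp only [mem_compl, mem_insert, not_or] at hw
    refine adj_of_not_contains_compl_doubleStar hB (by simpa using hA hu) hw.1
      (by rintro rfl; exact hw.2 hu) ?_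
    have := le_card_sdiff {u, w} (Gᶜ.neighborFinset o)
    have : #({u, w} : Finset V) ≤ 2 := card_le_two
    rw [card_neighborFinset_eq_degree] at *
    omega

theorem contains_treeDD_of_compl_degree_eq (hn : 6 ≤ n) (hV : Fintype.card V = 2 * n - 5)
    (hB : ¬ Contains Gᶜ (doubleStar (n - 3) 1)) {o : V} (ho : Gᶜ.degree o = n - 2) :
    Contains G (treeDD n) := by
  set A := Gᶜ.neighborFinset o
  have hA : #A = n - 2 := by rw [card_neighborFinset_eq_degree, ho]
  refine contains_treeDD_of_forall_mem_adj (by omega) (A := A) (by omega) (R := (insert o A)ᶜ) ?_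
    fun u hu w hw => ?_
  · rw [card_compl, card_insert_of_notMem (by simp [A]), hA, hV]
    omega
  · simp only [mem_compl, mem_insert, not_or] at hw
    refine adj_of_not_contains_compl_doubleStar hB (by simpa [A] using hu) hw.1
      (by rintro rfl; exact hw.2 hu) ?_
    have hsub : A.erase u ⊆ A \ {u, w} := fun v hv => by
      simp only [mem_erase] at hv
      have hvw : v ≠ w := fun h => hw.2 (h ▸ hv.2)
      simp [hv.1, hv.2, hvw]
    exact (by omega : n - 3 ≤ #A - 1).trans ((pred_card_le_card_erase).trans (card_le_card hsub))

theorem contains_treeDD_or_compl_contains_doubleStar (hn : 8 ≤ n)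
    (hV : Fintype.card V = 2 * n - 5) (G : SimpleGraph V) [DecidableRel G.Adj] :
    Contains G (treeDD n) ∨ Contains Gᶜ (doubleStar (n - 3) 1) := by
  refine or_iff_not_imp_right.2 fun hB => ?_
  by_cases hA : ∃ o, n - 2 ≤ Gᶜ.degree o
  · obtain ⟨o, ho⟩ := hA
    rcases ho.eq_or_lt with ho | ho
    · exact contains_treeDD_of_compl_degree_eq (by omega) hV hB ho.symm
    · exact contains_treeDD_of_le_compl_degree (by omega) hV hB (o := o) (by omega)
  push Not at hA
  have hδ (v : V) : n - 3 ≤ G.degree v := by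
    have := hA v
    have := G.degree_lt_card_verts v
    rw [degree_compl, hV] at *
    omega
  obtain ⟨x⟩ : Nonempty V := Fintype.card_pos_iff.1 (by omega)
  rcases le_or_gt (n - 1) (G.degree x) with hx | hx
  · exact contains_treeDD_of_le_degree (by omega) hx fun z _ =>
      (by omega : 5 ≤ n - 3).trans (hδ z)
  · exact contains_treeDD_of_degree_le hn hV hδ (by omega : G.degree x ≤ n - 2)

end UpperBound

section LowerBound

variable {V W : Type*}

theorem SimpleGraph.Reachable.mem_iff_of_forall_adj {G : SimpleGraph V} {s : Set V}
    (hG : ∀ u v, G.Adj u v → (u ∈ s ↔ v ∈ s)) {u v : V} (h : G.Reachable u v) :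
    u ∈ s ↔ v ∈ s := by
  obtain ⟨p⟩ := h
  induction p with
  | nil => rfl
  | cons huv _ ih => exact (hG _ _ huv).trans ih

theorem SimpleGraph.Connected.card_le_of_isContained [Fintype V] [DecidableEq V]
    [Fintype W] {G : SimpleGraph V} {H : SimpleGraph W} (s : Finset V)
    (hG : ∀ u v, G.Adj u v → (u ∈ s ↔ v ∈ s)) (hH : H.Connected) (h : H ⊑ G) :
    Fintype.card W ≤ #s ∨ Fintype.card W ≤ #sᶜ := by
  obtain ⟨f⟩ := h
  obtain ⟨w₀⟩ := hH.nonempty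
  have hf (w : W) : f w ∈ s ↔ f w₀ ∈ s :=
    ((hH.preconnected w w₀).map f.toHom).mem_iff_of_forall_adj (s := (s : Set V)) hG
  by_cases h₀ : f w₀ ∈ s
  · exact .inl (card_le_card_of_injOn f (fun w _ => (hf w).2 h₀) f.injective.injOn)
  · exact .inr (card_le_card_of_injOn f (fun w _ => by simpa [hf w]) f.injective.injOn)

theorem treeDD_connected {n : ℕ} (hn : 6 ≤ n) : (treeDD n).Connected := by
  have hadj (i j : Fin n) (h : (i : ℕ) = 0 ∧ 1 ≤ (j : ℕ) ∧ (j : ℕ) ≤ n - 4 ∨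
      (i : ℕ) = 1 ∧ ((j : ℕ) = n - 3 ∨ (j : ℕ) = n - 2) ∨ (i : ℕ) = 2 ∧ (j : ℕ) = n - 1) :
      (treeDD n).Adj i j := by
    refine ⟨fun hij => ?_, .inl h⟩
    subst hij
    omega
  refine (connected_iff_exists_forall_reachable _).2 ⟨⟨0, by omega⟩, fun ⟨j, hj⟩ => ?_⟩
  have h0 (i : ℕ) (hi1 : 1 ≤ i) (hi : i ≤ n - 4) :
      (treeDD n).Reachable ⟨0, by omega⟩ ⟨i, by omega⟩ :=
    (hadj _ _ (.inl ⟨rfl, hi1, hi⟩)).reachable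
  rcases (by omega : j = 0 ∨ (1 ≤ j ∧ j ≤ n - 4) ∨ j = n - 3 ∨ j = n - 2 ∨ j = n - 1) with
    rfl | ⟨h1, h2⟩ | h | h | h
  · rfl
  · exact h0 j h1 h2
  · exact (h0 1 le_rfl (by omega)).trans (hadj _ _ (.inr (.inl ⟨rfl, .inl h⟩))).reachable
  · exact (h0 1 le_rfl (by omega)).trans (hadj _ _ (.inr (.inl ⟨rfl, .inr h⟩))).reachable
  · exact (h0 2 (by omega) (by omega)).trans (hadj _ _ (.inr (.inr ⟨rfl, h⟩))).reachable

theorem le_degree_doubleStar_zero (k : ℕ) [Fintype ((doubleStar k 1).neighborSet 0)] :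
    k + 1 ≤ (doubleStar k 1).degree 0 := by
  have hadj (i : Fin (k + 1)) : (doubleStar k 1).Adj 0 i.castSucc.succ := by
    rw [doubleStar, fromRel_adj]
    simp only [ne_eq, Fin.ext_iff, Fin.val_zero, Fin.val_succ, Fin.val_castSucc, true_and]
    have := i.2
    omega
  have := Fintype.card_le_of_injective (β := (doubleStar k 1).neighborSet 0)
    (fun i => ⟨_, hadj i⟩) fun i j h => by simpa [Subtype.ext_iff] using h
  rwa [Fintype.card_fin, card_neighborSet_eq_degree] at this

theorem exists_not_contains_treeDD_of_card_le [Fintype V] {n : ℕ} (hn : 6 ≤ n)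
    (hV : Fintype.card V ≤ 2 * n - 6) :
    ∃ G : SimpleGraph V, ¬ Contains G (treeDD n) ∧ ¬ Contains Gᶜ (doubleStar (n - 3) 1) := by
  classical
  obtain ⟨s, -, hs⟩ := exists_subset_card_eq (Nat.div_le_self (#(univ : Finset V)) 2)
  have hsc : #sᶜ = Fintype.card V - #s := card_compl s
  rw [card_univ] at hs
  set K := (⊤ : SimpleGraph V).between s ↑sᶜ
  have hbip : K.IsBipartiteWith s ↑sᶜ :=
    between_isBipartiteWith (disjoint_coe.2 disjoint_compl_right)
  refine ⟨Kᶜ, fun h => ?_, fun h => ?_⟩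
  · have hside (u v : V) (huv : Kᶜ.Adj u v) : u ∈ s ↔ v ∈ s := by
      simp only [K, compl_adj, between_adj, top_adj, coe_compl, Set.mem_compl_iff, mem_coe] at huv
      tauto
    have := (treeDD_connected hn).card_le_of_isContained s hside (contains_iff_isContained.1 h)
    simp only [Fintype.card_fin] at this
    omega
  · rw [compl_compl, contains_iff_isContained] at h
    obtain ⟨f⟩ := h
    have hdeg := (le_degree_doubleStar_zero (n - 3)).trans (f.degree_le 0)
    by_cases h₀ : f 0 ∈ s
    · have := isBipartiteWith_degree_le hbip h₀
      omega
    · have := isBipartiteWith_degree_le' hbip (by simpa using h₀)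
      omega

end LowerBound

theorem stmt8 (n : ℕ) (hn : 10 ≤ n) :
    ramseyNumber (treeDD n) (doubleStar (n - 3) 1) = 2 * n - 5 := by
  classical
  have hmem : 2 * n - 5 ∈ {p | 0 < p ∧ ∀ G : SimpleGraph (Fin p),
      Contains G (treeDD n) ∨ Contains Gᶜ (doubleStar (n - 3) 1)} :=
    ⟨by omega, fun G => contains_treeDD_or_compl_contains_doubleStar (by omega) (Fintype.card_fin _) G⟩
  refine le_antisymm (Nat.sInf_le hmem) (le_csInf ⟨_, hmem⟩ fun p ⟨_, hp⟩ => ?_)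
  by_contra! hlt
  obtain ⟨G, hG, hGc⟩ := exists_not_contains_treeDD_of_card_le (V := Fin p) (n := n) (by omega)
    (by rw [Fintype.card_fin]; omega)
  exact (hp G).elim hG hGc
end

section
/- Let $n \ge 30$. Then $r(P_n, T_n'') = 2n-9$, where $P_n$ is the path on $n$ vertices and $T_n''$ is the tree defined below. -/
open SimpleGraph

/-!
For the lower bound, when `p ≤ 2n - 10` split `p` vertices into two cliques of at most `n - 5`
vertices each. A path stays inside one clique, so there is no `Pₙ`; the complement is bipartite
with parts of at most `n - 5` vertices, so no vertex has the `n - 4` neighbours that `v₀` has in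
`Tₙ''`.

For the upper bound, let `G` have `2n - 9` vertices and let `B` be the set of vertices with at
most four non-neighbours. If `|B| ≥ n`, two vertices of `B` always have `n` common neighbours, and
a path alternating between `B` and common neighbours reaches `n` vertices. If some vertex has
fewer than `n - 10` neighbours, it has at least `n + 1` non-neighbours, two of them outside `B`,
and these yield `Tₙ''` in `Gᶜ`. Otherwise `δ(G) ≥ n - 10`. If `G` is connected, Pósa's rotation
argument gives a path on `min (2δ + 1) (2n - 9) ≥ n` vertices: the ends of a longest path
`v₀ … v_ℓ` have all their neighbours on it, so if `ℓ < 2δ` there is an `i` with `v₀ ~ v_{i+1}` and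
`v_ℓ ~ v_i`. Then `v₀ … v_i v_ℓ … v_{i+1} v₀` is a cycle through the whole path; if the path
misses a vertex, an edge leaving the cycle gives a longer path. If `G` is not connected, a
component and its complement both have at least `n - 9` vertices, and `Gᶜ` contains the complete
bipartite graph between them, hence `Tₙ''`.
-/

open Finset

namespace SimpleGraph

variable {V : Type*}

section Paths

variable {G : SimpleGraph V}

theorem contains_pathGraph_of_isChain {l : List V} (hc : l.IsChain G.Adj) (hd : l.Nodup)
    {n : ℕ} (hn : n ≤ l.length) : Contains G (pathGraph n) := by
  refine ⟨⟨fun i => l[i.1], fun i j h => Fin.ext (hd.getElem_inj_iff.1 h)⟩, fun i j hij => ?_⟩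
  rw [List.isChain_iff_getElem] at hc
  obtain ⟨i, hi⟩ := i
  obtain ⟨j, hj⟩ := j
  rcases pathGraph_adj.1 hij with h | h <;> simp only at h <;> subst h
  · exact hc i (by omega)
  · exact (hc j (by omega)).symm

theorem mem_of_adj_of_mem_head? {l : List V} (hc : l.IsChain G.Adj) (hd : l.Nodup)
    (hmax : ∀ l' : List V, l'.IsChain G.Adj → l'.Nodup → l'.length ≤ l.length)
    {a w : V} (ha : a ∈ l.head?) (haw : G.Adj a w) : w ∈ l := by
  by_contra hw
  have := hmax (w :: l) (hc.cons fun y hy => Option.mem_unique ha hy ▸ haw.symm) (hd.cons hw)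
  simp at this

theorem mem_of_adj_of_mem_getLast? {l : List V} (hc : l.IsChain G.Adj) (hd : l.Nodup)
    (hmax : ∀ l' : List V, l'.IsChain G.Adj → l'.Nodup → l'.length ≤ l.length)
    {z w : V} (hz : z ∈ l.getLast?) (hzw : G.Adj z w) : w ∈ l := by
  rw [← List.mem_reverse]
  refine mem_of_adj_of_mem_head? (List.isChain_reverse.2 (hc.imp fun _ _ h => h.symm))
    (List.nodup_reverse.2 hd) (by simpa using hmax) (by rwa [List.head?_reverse]) hzw

theorem exists_cycle_of_crossing_chords {l : List V} (hc : l.IsChain G.Adj) {i : ℕ}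
    (hi : i + 1 < l.length) (h₁ : G.Adj l[0] l[i + 1]) (h₂ : G.Adj l[l.length - 1] l[i]) :
    ∃ c : List V, c.Perm l ∧ c.IsChain G.Adj ∧ ∀ u ∈ c.getLast?, ∀ v ∈ c.head?, G.Adj u v := by
  refine ⟨l.take (i + 1) ++ (l.drop (i + 1)).reverse, ?_, ?_, ?_⟩
  · exact ((List.reverse_perm _).append_left _).trans (by rw [List.take_append_drop])
  · refine (hc.take _).append (List.isChain_reverse.2 ((hc.drop _).imp fun _ _ h => h.symm)) ?_
    have e : i + 1 + (l.length - (i + 1) - 1) = l.length - 1 := by omega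
    simp [List.getLast?_eq_getElem?, hi, e, show min (i + 1) l.length - 1 = i by omega,
      List.getElem?_eq_getElem (show i < l.length by omega), h₂.symm]
  · simp only [List.getLast?_append, List.getLast?_reverse, List.head?_append, List.head?_take,
      List.head?_drop, List.getElem?_eq_getElem hi]
    simp [List.head?_eq_getElem?, List.getElem?_eq_getElem (show 0 < l.length by omega), h₁.symm]

theorem exists_longer_path_of_cycle {c : List V} (hc : c.IsChain G.Adj) (hd : c.Nodup)
    (hclose : ∀ u ∈ c.getLast?, ∀ v ∈ c.head?, G.Adj u v) {x b : V} (hx : x ∈ c) (hb : b ∉ c)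
    (hbx : G.Adj b x) : ∃ l : List V, l.IsChain G.Adj ∧ l.Nodup ∧ l.length = c.length + 1 := by
  obtain ⟨s, t, rfl⟩ := List.append_of_mem hx
  have hrot : (x :: t ++ s).IsChain G.Adj := by
    refine hc.right_of_append.append hc.left_of_append fun u hu v hv => hclose u ?_ v ?_
    · simpa [List.getLast?_append] using hu
    · cases s <;> simp_all
  refine ⟨b :: (x :: t ++ s), hrot.cons (by simpa using hbx), ?_, by simp; omega⟩
  exact List.Nodup.cons (by simp at hb ⊢; tauto) (List.perm_append_comm.nodup_iff.2 hd)

variable (G) in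
theorem exists_maximal_path [Fintype V] [Nonempty V] :
    ∃ l : List V, l ≠ [] ∧ l.IsChain G.Adj ∧ l.Nodup ∧
      ∀ l' : List V, l'.IsChain G.Adj → l'.Nodup → l'.length ≤ l.length := by
  set S : Set ℕ := {m | ∃ l : List V, l.IsChain G.Adj ∧ l.Nodup ∧ l.length = m}
  have h₁ : 1 ∈ S := ⟨[Classical.arbitrary V], .singleton _, List.nodup_singleton _, rfl⟩
  have hbdd : BddAbove S := ⟨Fintype.card V, fun _ ⟨_, _, hd, hl⟩ => hl ▸ hd.length_le_card⟩
  obtain ⟨l, hc, hd, hl⟩ := Nat.sSup_mem ⟨1, h₁⟩ hbdd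
  refine ⟨l, ?_, hc, hd, fun l' hc' hd' => hl ▸ le_csSup hbdd ⟨l', hc', hd', rfl⟩⟩
  rw [← List.length_pos_iff, hl]
  exact le_csSup hbdd h₁

variable [Fintype V] [DecidableRel G.Adj]

theorem exists_crossing_chords {l : List V} {k : ℕ} (hlen : l.length ≤ 2 * k)
    (hpos : 0 < l.length) (hk₀ : k ≤ G.degree l[0]) (hk₁ : k ≤ G.degree l[l.length - 1])
    (h₀ : ∀ w, G.Adj l[0] w → w ∈ l) (h₁ : ∀ w, G.Adj l[l.length - 1] w → w ∈ l) :
    ∃ i, ∃ hi : i + 1 < l.length, G.Adj l[0] l[i + 1] ∧ G.Adj l[l.length - 1] l[i] := by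
  set a := l[0]
  set z := l[l.length - 1]
  -- `getD` keeps the predicates proof-free; out-of-range indices fail them as `G` is loopless.
  set S := (range (l.length - 1)).filter fun i => G.Adj a (l.getD (i + 1) a)
  set T := (range (l.length - 1)).filter fun i => G.Adj z (l.getD i z)
  have hS : k ≤ #S := by
    refine hk₀.trans (card_le_card_of_surjOn (fun i => l.getD (i + 1) a) fun w hw => ?_)
    rw [mem_coe, mem_neighborFinset] at hw
    obtain ⟨j, hj, rfl⟩ := List.mem_iff_getElem.1 (h₀ _ hw)
    obtain rfl | hj₀ := Nat.eq_zero_or_pos j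
    · exact (G.irrefl hw).elim
    refine ⟨j - 1, ?_, ?_⟩ <;>
      simp [S, Nat.sub_add_cancel hj₀, List.getElem?_eq_getElem hj, hw]
    omega
  have hT : k ≤ #T := by
    refine hk₁.trans (card_le_card_of_surjOn (fun i => l.getD i z) fun w hw => ?_)
    rw [mem_coe, mem_neighborFinset] at hw
    obtain ⟨j, hj, rfl⟩ := List.mem_iff_getElem.1 (h₁ _ hw)
    obtain rfl | hj₁ := eq_or_ne j (l.length - 1)
    · exact (G.irrefl hw).elim
    refine ⟨j, ?_, ?_⟩ <;> simp [T, List.getElem?_eq_getElem hj, hw]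
    omega
  obtain ⟨i, hi⟩ : (S ∩ T).Nonempty := by
    have hunion : #(S ∪ T) ≤ l.length - 1 :=
      (card_le_card (union_subset (filter_subset _ _) (filter_subset _ _))).trans_eq (card_range _)
    rw [← card_pos]
    have := card_union_add_card_inter S T
    omega
  simp only [S, T, mem_inter, mem_filter, mem_range] at hi
  refine ⟨i, by omega, ?_, ?_⟩
  · simpa [List.getElem?_eq_getElem (show i + 1 < l.length by omega)] using hi.1.2
  · simpa [List.getElem?_eq_getElem (show i < l.length by omega)] using hi.2.2

theorem Preconnected.exists_path_of_le_degree (hG : G.Preconnected) {k : ℕ}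
    (hk : ∀ v, k ≤ G.degree v) :
    ∃ l : List V, l.IsChain G.Adj ∧ l.Nodup ∧ min (2 * k + 1) (Fintype.card V) ≤ l.length := by
  cases isEmpty_or_nonempty V
  · exact ⟨[], .nil, List.nodup_nil, by simp⟩
  obtain ⟨l, hne, hc, hd, hmax⟩ := exists_maximal_path G
  refine ⟨l, hc, hd, ?_⟩
  by_contra! hlt
  have hpos : 0 < l.length := List.length_pos_iff.2 hne
  obtain ⟨i, hi, h₀, h₁⟩ := exists_crossing_chords (by omega) hpos (hk _) (hk _)
    (fun w => mem_of_adj_of_mem_head? hc hd hmax (by simp [List.head?_eq_getElem?]))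
    (fun w => mem_of_adj_of_mem_getLast? hc hd hmax (by simp [List.getLast?_eq_getElem?]))
  obtain ⟨c, hperm, hcc, hclose⟩ := exists_cycle_of_crossing_chords hc hi h₀ h₁
  obtain ⟨b, hb⟩ : ∃ b, b ∉ l := by
    by_contra! h
    classical
    have := card_le_card (s := univ) fun b _ => List.mem_toFinset.2 (h b)
    rw [card_univ] at this
    have := l.toFinset_card_le
    omega
  obtain ⟨d, -, hd₁, hd₂⟩ := (hG l[0] b).some.exists_boundary_dart {v | v ∈ l}
    (List.getElem_mem _) hb
  obtain ⟨l', hc', hd', hlen'⟩ := exists_longer_path_of_cycle hcc (hperm.nodup_iff.2 hd) hclose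
    (hperm.mem_iff.2 hd₁) (by rwa [hperm.mem_iff]) d.adj.symm
  have := hmax l' hc' hd'
  rw [hperm.length_eq] at hlen'
  omega

variable [DecidableEq V]

theorem exists_cons_cons_of_le_card_inter {B : Finset V} {m : ℕ} (hB : m ≤ #B)
    (hcommon : ∀ b ∈ B, ∀ b' ∈ B, b ≠ b' → m ≤ #(G.neighborFinset b ∩ G.neighborFinset b'))
    {b : V} (hb : b ∈ B) {t : List V} (hc : (b :: t).IsChain G.Adj) (hd : (b :: t).Nodup)
    (ht : t.length + 1 < m) :
    ∃ b' ∈ B, ∃ x, (b' :: x :: b :: t).IsChain G.Adj ∧ (b' :: x :: b :: t).Nodup := by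
  have hcard : #(b :: t).toFinset < m := by
    rwa [List.toFinset_card_of_nodup hd, List.length_cons]
  obtain ⟨b', hb'⟩ : (B \ (b :: t).toFinset).Nonempty := by
    rw [← card_pos]
    have := le_card_sdiff (b :: t).toFinset B
    omega
  rw [mem_sdiff, List.mem_toFinset] at hb'
  obtain ⟨x, hx⟩ :
      ((G.neighborFinset b ∩ G.neighborFinset b') \ (b :: t).toFinset).Nonempty := by
    rw [← card_pos]
    have := le_card_sdiff (b :: t).toFinset (G.neighborFinset b ∩ G.neighborFinset b')
    have := hcommon b hb b' hb'.1 (by rintro rfl; exact hb'.2 List.mem_cons_self)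
    omega
  simp only [mem_sdiff, mem_inter, mem_neighborFinset, List.mem_toFinset] at hx
  refine ⟨b', hb'.1, x, (hc.cons_cons hx.1.1.symm).cons_cons hx.1.2, (hd.cons hx.2).cons ?_⟩
  simpa [hx.1.2.ne] using hb'.2

theorem contains_pathGraph_of_le_card_inter_neighborFinset (B : Finset V) {m : ℕ}
    (hB : m ≤ #B)
    (hcommon : ∀ b ∈ B, ∀ b' ∈ B, b ≠ b' → m ≤ #(G.neighborFinset b ∩ G.neighborFinset b')) :
    Contains G (pathGraph m) := by
  obtain rfl | hm := Nat.eq_zero_or_pos m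
  · exact contains_pathGraph_of_isChain (l := []) .nil List.nodup_nil le_rfl
  have hodd : ∀ k, 2 * k ≤ m → ∃ b ∈ B, ∃ t : List V,
      (b :: t).IsChain G.Adj ∧ (b :: t).Nodup ∧ t.length = 2 * k := by
    intro k hk
    induction k with
    | zero =>
      obtain ⟨b, hb⟩ := card_pos.1 (hm.trans_le hB)
      exact ⟨b, hb, [], .singleton b, List.nodup_singleton b, rfl⟩
    | succ k ih =>
      obtain ⟨b, hb, t, hc, hd, ht⟩ := ih (by omega)
      obtain ⟨b', hb', x, hc', hd'⟩ :=
        exists_cons_cons_of_le_card_inter hB hcommon hb hc hd (by omega)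
      exact ⟨b', hb', x :: b :: t, hc', hd', by simp [ht]; ring⟩
  obtain ⟨b, -, t, hc, hd, ht⟩ := hodd (m / 2) (by omega)
  exact contains_pathGraph_of_isChain hc hd (by simp [ht]; omega)

end Paths

section Trees

variable {H : SimpleGraph V}

-- `l` lists the images of `v₀, …, v_{n-1}`.
theorem contains_treeDD_of_list {n : ℕ} (hn : 6 ≤ n) {u₀ u₁ u₂ x₁ x₂ y : V} {W : List V}
    (hW : W.length = n - 6) (hd : ([u₀, u₁, u₂] ++ W ++ [x₁, x₂, y]).Nodup)
    (h₁ : H.Adj u₀ u₁) (h₂ : H.Adj u₀ u₂) (hW₀ : ∀ w ∈ W, H.Adj u₀ w)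
    (hx₁ : H.Adj u₁ x₁) (hx₂ : H.Adj u₁ x₂) (hy : H.Adj u₂ y) : Contains H (treeDD n) := by
  set l := [u₀, u₁, u₂] ++ W ++ [x₁, x₂, y]
  have hlen : l.length = n := by simp [l, hW]; omega
  have hstar : ∀ i (h : i < l.length), 1 ≤ i → i ≤ n - 4 → H.Adj u₀ l[i] := by
    intro i h hi₁ hi₂
    obtain rfl | rfl | hi₃ : i = 1 ∨ i = 2 ∨ 3 ≤ i := by omega
    · exact h₁
    · exact h₂
    · refine hW₀ _ ?_
      simp only [l, List.getElem_append_left (show i < ([u₀, u₁, u₂] ++ W).length by simp; omega),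
        List.getElem_append_right (show [u₀, u₁, u₂].length ≤ i by simp; omega)]
      exact List.getElem_mem _
  have hleaf : ∀ i (h : i < l.length), n - 3 ≤ i →
      l[i] = [x₁, x₂, y][i - (n - 3)]'(by simp; omega) := by
    intro i h hi
    simp only [l]
    rw [List.getElem_append_right (by simp; omega)]
    congr 1
    simp; omega
  refine ⟨⟨fun i => l[i.1], fun i j h => Fin.ext (hd.getElem_inj_iff.1 h)⟩, ?_⟩
  suffices hrel : ∀ i j : Fin n, ((i : ℕ) = 0 ∧ 1 ≤ (j : ℕ) ∧ (j : ℕ) ≤ n - 4) ∨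
      ((i : ℕ) = 1 ∧ ((j : ℕ) = n - 3 ∨ (j : ℕ) = n - 2)) ∨ ((i : ℕ) = 2 ∧ (j : ℕ) = n - 1) →
      H.Adj l[i.1] l[j.1] by
    intro i j hij
    rcases (fromRel_adj _ _ _).1 hij with ⟨-, h | h⟩
    · exact hrel i j h
    · exact (hrel j i h).symm
  rintro ⟨i, hi⟩ ⟨j, hj⟩ (⟨rfl, hj₁, hj₂⟩ | ⟨rfl, rfl | rfl⟩ | ⟨rfl, rfl⟩)
  · exact hstar j _ hj₁ hj₂
  · show H.Adj u₁ _
    simpa [hleaf (n - 3) (by omega) le_rfl] using hx₁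
  · show H.Adj u₁ _
    simpa [hleaf (n - 2) (by omega) (by omega), show n - 2 - (n - 3) = 1 by omega] using hx₂
  · show H.Adj u₂ _
    simpa [hleaf (n - 1) (by omega) (by omega), show n - 1 - (n - 3) = 2 by omega] using hy

variable [Fintype V] [DecidableEq V] [DecidableRel H.Adj]

theorem contains_treeDD_of_adj {n : ℕ} (hn : 6 ≤ n) {u₀ u₁ u₂ x₁ x₂ y : V}
    (h₁ : H.Adj u₀ u₁) (h₂ : H.Adj u₀ u₂)
    (hx₁ : H.Adj u₁ x₁) (hx₂ : H.Adj u₁ x₂) (hy : H.Adj u₂ y)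
    (hd : [u₀, u₁, u₂, x₁, x₂, y].Nodup)
    (hdeg : n - 6 ≤ #(H.neighborFinset u₀ \ {u₁, u₂, x₁, x₂, y})) : Contains H (treeDD n) := by
  obtain ⟨W, hWsub, hWcard⟩ := exists_subset_card_eq hdeg
  have hW : ∀ w ∈ W, H.Adj u₀ w ∧ w ∉ [u₁, u₂, x₁, x₂, y] := fun w hw => by
    simpa using hWsub hw
  refine contains_treeDD_of_list hn (W := W.toList) (by simpa using hWcard) ?_ h₁ h₂
    (fun w hw => (hW w (mem_toList.1 hw)).1) hx₁ hx₂ hy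
  have hperm : ([u₀, u₁, u₂] ++ W.toList ++ [x₁, x₂, y]).Perm
      ([u₀, u₁, u₂, x₁, x₂, y] ++ W.toList) := by
    simpa using (List.perm_append_comm (l₁ := W.toList) (l₂ := [x₁, x₂, y])).append_left
      [u₀, u₁, u₂]
  refine hperm.nodup_iff.2 (List.nodup_append.2 ⟨hd, W.nodup_toList, ?_⟩)
  rintro a ha b hb rfl
  obtain ⟨hadj, hnot⟩ := hW a (mem_toList.1 hb)
  rcases List.mem_cons.1 ha with rfl | ha
  · exact H.irrefl hadj
  · exact hnot ha

theorem contains_treeDD_of_le_degree {n : ℕ} (hn : 6 ≤ n) {v u₁ u₂ : V} (h₁ : H.Adj v u₁)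
    (h₂ : H.Adj v u₂) (h₁₂ : u₁ ≠ u₂)
    (hv : n - 1 ≤ H.degree v) (hu₁ : 4 ≤ H.degree u₁) (hu₂ : 5 ≤ H.degree u₂) :
    Contains H (treeDD n) := by
  obtain ⟨x₁, hx₁, x₂, hx₂, hx₁₂⟩ := one_lt_card.1 <| show 1 < #(H.neighborFinset u₁ \ {v, u₂}) by
    have h := le_card_sdiff {v, u₂} (H.neighborFinset u₁)
    rw [card_neighborFinset_eq_degree] at h
    have := card_le_two (a := v) (b := u₂)
    omega
  obtain ⟨y, hy⟩ := card_pos.1 <| show 0 < #(H.neighborFinset u₂ \ {v, u₁, x₁, x₂}) by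
    have h := le_card_sdiff {v, u₁, x₁, x₂} (H.neighborFinset u₂)
    rw [card_neighborFinset_eq_degree] at h
    have := card_le_four (a := v) (b := u₁) (c := x₁) (d := x₂)
    omega
  simp only [mem_sdiff, mem_insert, mem_singleton, mem_neighborFinset, not_or] at hx₁ hx₂ hy
  refine contains_treeDD_of_adj hn h₁ h₂ hx₁.1 hx₂.1 hy.1 ?_ ?_
  · simp only [List.nodup_cons, List.mem_cons, List.not_mem_nil, or_false, not_or,
      List.nodup_nil]
    grind [Adj.ne]
  · have h := le_card_sdiff {u₁, u₂, x₁, x₂, y} (H.neighborFinset v)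
    rw [card_neighborFinset_eq_degree] at h
    have := card_le_five (a := u₁) (b := u₂) (c := x₁) (d := x₂) (e := y)
    omega

theorem contains_treeDD_of_forall_adj {n : ℕ} (hn : 6 ≤ n) (s : Finset V)
    (hcut : ∀ u ∈ s, ∀ v ∉ s, H.Adj u v) (hs : n - 4 ≤ #s) (hsc : 4 ≤ #sᶜ) :
    Contains H (treeDD n) := by
  obtain ⟨u₀, hu₀⟩ := card_pos.1 (show 0 < #sᶜ by omega)
  obtain ⟨x₁, x₂, y, hx₁, hx₂, hy, hx₁₂, hx₁y, hx₂y⟩ :=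
    two_lt_card_iff.1 (show 2 < #(sᶜ.erase u₀) by rw [card_erase_of_mem hu₀]; omega)
  obtain ⟨u₁, u₂, hu₁, hu₂, hu₁₂⟩ := one_lt_card_iff.1 (show 1 < #s by omega)
  simp only [mem_erase, mem_compl] at hu₀ hx₁ hx₂ hy
  refine contains_treeDD_of_adj hn (hcut _ hu₁ _ hu₀).symm (hcut _ hu₂ _ hu₀).symm
    (hcut _ hu₁ _ hx₁.2) (hcut _ hu₁ _ hx₂.2) (hcut _ hu₂ _ hy.2) ?_ ?_
  · simp only [List.nodup_cons, List.mem_cons, List.not_mem_nil, or_false, not_or,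
      List.nodup_nil]
    grind
  · have hsub : s \ {u₁, u₂} ⊆ H.neighborFinset u₀ \ {u₁, u₂, x₁, x₂, y} := by
      intro w hw
      simp only [mem_sdiff, mem_insert, mem_singleton, not_or, mem_neighborFinset] at hw ⊢
      exact ⟨(hcut _ hw.1 _ hu₀).symm, hw.2.1, hw.2.2, ne_of_mem_of_not_mem hw.1 hx₁.2,
        ne_of_mem_of_not_mem hw.1 hx₂.2, ne_of_mem_of_not_mem hw.1 hy.2⟩
    have := card_le_card hsub
    have := le_card_sdiff {u₁, u₂} s
    have := card_le_two (a := u₁) (b := u₂)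
    omega

end Trees

section UpperBound

variable [Fintype V] [DecidableEq V] {G : SimpleGraph V} [DecidableRel G.Adj]

theorem degree_add_degree_le_card_inter_add_card (u v : V) :
    G.degree u + G.degree v ≤ #(G.neighborFinset u ∩ G.neighborFinset v) + Fintype.card V := by
  rw [← card_neighborFinset_eq_degree, ← card_neighborFinset_eq_degree,
    ← card_union_add_card_inter, add_comm]
  exact Nat.add_le_add_left (card_le_univ _) _

theorem degree_add_degree_compl (v : V) : G.degree v + Gᶜ.degree v + 1 = Fintype.card V := by
  have := G.degree_lt_card_verts v
  rw [degree_compl]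
  omega

theorem exists_forall_compl_adj_of_not_preconnected (hG : ¬G.Preconnected) {k : ℕ}
    (hk : ∀ v, k ≤ G.degree v) :
    ∃ s : Finset V, (∀ u ∈ s, ∀ v ∉ s, Gᶜ.Adj u v) ∧ k < #s ∧ k < #sᶜ := by
  simp only [Preconnected, not_forall] at hG
  obtain ⟨u, w, huw⟩ := hG
  refine ⟨univ.filter (G.Reachable u), fun x hx y hy => ?_, ?_, ?_⟩
  · simp only [mem_filter, mem_univ, true_and] at hx hy
    exact (compl_adj _ _ _).2 ⟨fun h => hy (h ▸ hx), fun h => hy (hx.trans h.reachable)⟩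
  · have hsub : insert u (G.neighborFinset u) ⊆ univ.filter (G.Reachable u) := by
      intro x hx
      simp only [mem_insert, mem_neighborFinset, mem_filter, mem_univ, true_and] at hx ⊢
      exact hx.elim (· ▸ Reachable.refl _) Adj.reachable
    have := card_le_card hsub
    rw [card_insert_of_notMem (by simp), card_neighborFinset_eq_degree] at this
    exact (hk u).trans_lt this
  · have hsub : insert w (G.neighborFinset w) ⊆ (univ.filter (G.Reachable u))ᶜ := by
      intro x hx
      simp only [mem_insert, mem_neighborFinset, mem_compl, mem_filter, mem_univ, true_and] at hx ⊢
      rintro hux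
      exact huw (hx.elim (· ▸ hux) fun h => hux.trans h.reachable.symm)
    have := card_le_card hsub
    rw [card_insert_of_notMem (by simp), card_neighborFinset_eq_degree] at this
    exact (hk w).trans_lt this

theorem contains_pathGraph_or_compl_contains_treeDD_of_le_degree {n : ℕ} (hn : 19 ≤ n)
    (hV : Fintype.card V = 2 * n - 9) (hδ : ∀ v, n - 10 ≤ G.degree v) :
    Contains G (pathGraph n) ∨ Contains Gᶜ (treeDD n) := by
  by_cases hG : G.Preconnected
  · obtain ⟨l, hc, hd, hl⟩ := hG.exists_path_of_le_degree hδ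
    exact .inl (contains_pathGraph_of_isChain hc hd (by omega))
  obtain ⟨s, hcut, hs, hsc⟩ := exists_forall_compl_adj_of_not_preconnected hG hδ
  have := card_add_card_compl s
  rcases le_or_gt (n - 4) #s with h | h
  · exact .inr (contains_treeDD_of_forall_adj (by omega) s hcut h (by omega))
  · refine .inr (contains_treeDD_of_forall_adj (by omega) sᶜ (fun u hu v hv => ?_) (by omega)
      (by rw [compl_compl]; omega))
    exact (hcut v (by simpa using hv) u (mem_compl.1 hu)).symm

theorem contains_pathGraph_or_compl_contains_treeDD {n : ℕ} (hn : 19 ≤ n)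
    (hV : Fintype.card V = 2 * n - 9) :
    Contains G (pathGraph n) ∨ Contains Gᶜ (treeDD n) := by
  have hdeg := degree_add_degree_compl (G := G)
  set B := univ.filter fun v => Gᶜ.degree v ≤ 4
  -- Two vertices of `B` have at least `2 (2n - 14) - (2n - 9) ≥ n` common neighbours.
  by_cases hB : n ≤ #B
  · refine .inl (contains_pathGraph_of_le_card_inter_neighborFinset B hB fun b hb b' hb' _ => ?_)
    simp only [B, mem_filter, mem_univ, true_and] at hb hb'
    have := degree_add_degree_le_card_inter_add_card (G := G) b b'
    have := hdeg b
    have := hdeg b'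
    omega
  by_cases hδ : ∀ v, n - 10 ≤ G.degree v
  · exact contains_pathGraph_or_compl_contains_treeDD_of_le_degree hn hV hδ
  simp only [not_forall, not_le] at hδ
  obtain ⟨v, hv⟩ := hδ
  obtain ⟨u₁, hu₁, u₂, hu₂, hu₁₂⟩ := one_lt_card.1 <| show 1 < #(Gᶜ.neighborFinset v \ B) by
    have h := le_card_sdiff B (Gᶜ.neighborFinset v)
    rw [card_neighborFinset_eq_degree] at h
    have := hdeg v
    omega
  simp only [B, mem_sdiff, mem_neighborFinset, mem_filter, mem_univ, true_and, not_le] at hu₁ hu₂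
  have := hdeg v
  exact .inr (contains_treeDD_of_le_degree (by omega) hu₁.1 hu₂.1 hu₁₂ (by omega) (by omega) hu₂.2)

end UpperBound

section LowerBound

theorem Reachable.iff_of_forall_adj {G : SimpleGraph V} {P : V → Prop}
    (hP : ∀ u v, G.Adj u v → (P u ↔ P v)) {u v : V} (h : G.Reachable u v) : P u ↔ P v := by
  obtain ⟨p⟩ := h
  induction p with
  | nil => rfl
  | cons ha _ ih => exact (hP _ _ ha).trans ih

theorem le_card_of_contains_pathGraph [Fintype V] {G : SimpleGraph V} {P : V → Prop}
    [DecidablePred P] (hP : ∀ u v, G.Adj u v → (P u ↔ P v)) {n : ℕ}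
    (h : Contains G (pathGraph n)) : n ≤ #{v | P v} ∨ n ≤ #{v | ¬P v} := by
  obtain ⟨f, hf⟩ := h
  obtain rfl | hn := Nat.eq_zero_or_pos n
  · simp
  have hside : ∀ i, P (f i) ↔ P (f ⟨0, hn⟩) := fun i =>
    Reachable.iff_of_forall_adj hP ((pathGraph_preconnected n i _).map ⟨f, hf _ _⟩)
  have hcard (Q : V → Prop) [DecidablePred Q] (hQ : ∀ i, Q (f i)) : n ≤ #{v | Q v} := by
    simpa using card_le_card_of_injOn (s := univ) f (fun i _ => by simpa using hQ i)
      f.injective.injOn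
  by_cases h₀ : P (f ⟨0, hn⟩)
  · exact .inl (hcard _ fun i => (hside i).2 h₀)
  · exact .inr (hcard _ fun i => mt (hside i).1 h₀)

theorem exists_le_degree_of_contains_treeDD [Fintype V] {H : SimpleGraph V} [DecidableRel H.Adj]
    {n : ℕ} (hn : 0 < n) (h : Contains H (treeDD n)) : ∃ v, n - 4 ≤ H.degree v := by
  obtain ⟨f, hf⟩ := h
  refine ⟨f ⟨0, hn⟩, ?_⟩
  have := card_le_card_of_injOn (s := (univ : Finset (Fin (n - 4))))
    (t := H.neighborFinset (f ⟨0, hn⟩)) (fun i => f ⟨i + 1, by omega⟩) (fun i _ => ?_)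
    (fun i _ j _ hij => ?_)
  · simpa using this
  · simp only [coe_neighborFinset, mem_neighborSet]
    exact hf _ _ ((fromRel_adj _ _ _).2
      ⟨by simp [Fin.ext_iff], .inl (.inl ⟨rfl, by simp, by simp⟩)⟩)
  · simpa [Fin.ext_iff] using f.injective hij

def twoCliques (p k : ℕ) : SimpleGraph (Fin p) where
  Adj u v := u ≠ v ∧ ((u : ℕ) < k ↔ (v : ℕ) < k)
  symm := ⟨fun _ _ h => ⟨h.1.symm, h.2.symm⟩⟩
  loopless := ⟨fun _ h => h.1 rfl⟩

@[simp]
theorem twoCliques_adj {p k : ℕ} {u v : Fin p} :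
    (twoCliques p k).Adj u v ↔ u ≠ v ∧ ((u : ℕ) < k ↔ (v : ℕ) < k) :=
  Iff.rfl

theorem card_filter_val_lt_le (p k : ℕ) : #{v : Fin p | (v : ℕ) < k} ≤ k := by
  rw [Fin.card_filter_val_lt]
  exact min_le_right _ _

theorem card_filter_not_val_lt (p k : ℕ) : #{v : Fin p | ¬(v : ℕ) < k} = p - k := by
  have := card_filter_add_card_filter_not (s := univ) fun v : Fin p => (v : ℕ) < k
  rw [Fin.card_filter_val_lt, card_univ, Fintype.card_fin] at this
  omega

theorem not_contains_pathGraph_twoCliques {n p k : ℕ} (hk : k < n) (hp : p < n + k) :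
    ¬Contains (twoCliques p k) (pathGraph n) := fun h => by
  have := card_filter_val_lt_le p k
  have := card_filter_not_val_lt p k
  rcases le_card_of_contains_pathGraph (fun _ _ h => (twoCliques_adj.1 h).2) h with h | h <;>
    omega

theorem not_contains_treeDD_compl_twoCliques {n p k : ℕ} (hk : k < n - 4) (hp : p < n - 4 + k) :
    ¬Contains (twoCliques p k)ᶜ (treeDD n) := fun h => by
  classical
  obtain ⟨v, hv⟩ := exists_le_degree_of_contains_treeDD (by omega) h
  have hside : ∀ w, (twoCliques p k)ᶜ.Adj v w → ¬((w : ℕ) < k ↔ (v : ℕ) < k) :=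
    fun w hw hiff => ((compl_adj _ _ _).1 hw).2 (twoCliques_adj.2 ⟨hw.ne, hiff.symm⟩)
  have := card_filter_val_lt_le p k
  have := card_filter_not_val_lt p k
  by_cases hv' : (v : ℕ) < k
  · have := card_le_card (t := {w : Fin p | ¬(w : ℕ) < k}) fun w hw => by
      simpa [hv'] using hside w ((mem_neighborFinset _ _ _).1 hw)
    rw [card_neighborFinset_eq_degree] at this
    omega
  · have := card_le_card (t := {w : Fin p | (w : ℕ) < k}) fun w hw => by
      simpa [hv'] using hside w ((mem_neighborFinset _ _ _).1 hw)
    rw [card_neighborFinset_eq_degree] at this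
    omega

end LowerBound

end SimpleGraph

theorem ramseyNumber_eq_of {α β : Type*} {G₁ : SimpleGraph α} {G₂ : SimpleGraph β} {N : ℕ}
    (hN : 0 < N) (hup : ∀ G : SimpleGraph (Fin N), Contains G G₁ ∨ Contains Gᶜ G₂)
    (hlow : ∀ p < N, ∃ G : SimpleGraph (Fin p), ¬Contains G G₁ ∧ ¬Contains Gᶜ G₂) :
    ramseyNumber G₁ G₂ = N := by
  refine le_antisymm (Nat.sInf_le ⟨hN, hup⟩) (le_csInf ⟨N, hN, hup⟩ fun p ⟨_, hp⟩ => ?_)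
  by_contra! h
  obtain ⟨G, h₁, h₂⟩ := hlow p h
  exact (hp G).elim h₁ h₂

theorem stmt9 (n : ℕ) (hn : 30 ≤ n) :
    ramseyNumber (SimpleGraph.pathGraph n) (treeDD n) = 2 * n - 9 := by
  classical
  refine ramseyNumber_eq_of (by omega) (fun G => ?_) fun p hp => ⟨twoCliques p (n - 5), ?_, ?_⟩
  · exact contains_pathGraph_or_compl_contains_treeDD (by omega) (Fintype.card_fin _)
  · exact not_contains_pathGraph_twoCliques (by omega) (by omega)
  · exact not_contains_treeDD_compl_twoCliques (by omega) (by omega)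
end

section
/- Let $m, n_1, n_2$ be positive integers with $n_1 \ge m-2 > n_2$, $mn_1$ odd, and $n_1 > m-5+n_2+\frac{(n_2-1)^2}{m-2-n_2}$. Then $r(K_{1,m-1}, S(n_1,n_2)) = m-1+n_1$. -/
/-!
Lower bound: on `m - 2 + n₁` vertices, a circulant graph with jumps `±1, …, ±(m - 3)/2` is
`(m - 3)`-regular, so it has no `K_{1,m-1}`, and its complement is `n₁`-regular, so it has no
vertex of degree `n₁ + 1` and hence no `S(n₁, n₂)`.

Upper bound: if `G` on `m - 1 + n₁` vertices has no `K_{1,m-1}`, its complement `H` has minimum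
degree at least `n₁`. As `m - 1 + n₁` and `n₁` are odd, `H` is not `n₁`-regular, so some `u`
has degree `d > n₁`. If `H` has no `S(n₁, n₂)`, every neighbour of `u` has at most `n₁ + n₂ - d`
neighbours outside `N[u]`, while each of the `s = m - 2 + n₁ - d` vertices outside `N[u]` has at
least `n₁ + 1 - s` neighbours in `N(u)`. Double counting the edges between `N(u)` and the rest
gives `s (n₁ + 1 - s) ≤ d (n₁ + n₂ - d)`, which the lower bound on `n₁` rules out.
-/

open SimpleGraph

open Finset

variable {U V W : Type*}

lemma Contains.trans {G : SimpleGraph V} {H : SimpleGraph W} {L : SimpleGraph U}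
    (hGH : Contains G H) (hHL : Contains H L) : Contains G L := by
  obtain ⟨f, hf⟩ := hGH
  obtain ⟨g, hg⟩ := hHL
  exact ⟨g.trans f, fun a b h => hf _ _ (hg a b h)⟩

lemma contains_comap (G : SimpleGraph V) (e : W ↪ V) : Contains G (G.comap e) :=
  ⟨e, fun _ _ h => h⟩

lemma compl_contains_compl_comap (G : SimpleGraph V) (e : W ↪ V) :
    Contains Gᶜ (G.comap e)ᶜ :=
  ⟨e, fun _ _ h => ⟨e.injective.ne h.1, h.2⟩⟩

lemma ramseyNumber_eq_of_witness {α β : Type*} {G₁ : SimpleGraph α} {G₂ : SimpleGraph β}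
    [Fintype V] {p : ℕ} (G : SimpleGraph V) (hp : Fintype.card V + 1 = p)
    (hG₁ : ¬Contains G G₁) (hG₂ : ¬Contains Gᶜ G₂)
    (hup : ∀ F : SimpleGraph (Fin p), Contains F G₁ ∨ Contains Fᶜ G₂) :
    ramseyNumber G₁ G₂ = p := by
  refine IsLeast.csInf_eq ⟨⟨by omega, hup⟩, fun q ⟨_, hq⟩ => ?_⟩
  by_contra! hqp
  let e : Fin q ↪ V := (Fin.castLEEmb (by omega)).trans (Fintype.equivFin V).symm.toEmbedding
  rcases hq (G.comap e) with h | h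
  · exact hG₁ ((contains_comap G e).trans h)
  · exact hG₂ ((compl_contains_compl_comap G e).trans h)

lemma Contains.exists_le_degree [Fintype V] [Fintype W] {G : SimpleGraph V}
    {H : SimpleGraph W} [DecidableRel G.Adj] [DecidableRel H.Adj] (h : Contains G H) (a : W) :
    ∃ v, H.degree a ≤ G.degree v := by
  obtain ⟨f, hf⟩ := h
  exact ⟨f a, Copy.degree_le ⟨⟨f, hf _ _⟩, f.injective⟩ a⟩

lemma Finset.exists_fin_embedding_mem {s : Finset V} {n : ℕ} (h : n ≤ #s) :
    ∃ f : Fin n ↪ V, ∀ i, f i ∈ s := by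
  obtain ⟨e⟩ := Function.Embedding.nonempty_of_card_le (α := Fin n) (β := s) (by simpa using h)
  exact ⟨e.trans (Function.Embedding.subtype _), fun i => (e i).2⟩

section Star

variable {m : ℕ} [Fintype V] {G : SimpleGraph V} [DecidableRel G.Adj]

lemma starGraph_eq_starGraph (hm : 0 < m) :
    _root_.starGraph m = SimpleGraph.starGraph (⟨0, hm⟩ : Fin m) := by
  ext x y
  simp [_root_.starGraph, Fin.ext_iff]

lemma contains_starGraph_of_le_degree {v : V} (h : m - 1 ≤ G.degree v) :
    Contains G (_root_.starGraph m) := by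
  obtain _ | k := m
  · exact ⟨Function.Embedding.ofIsEmpty, fun a => a.elim0⟩
  obtain ⟨g, hg⟩ := (G.neighborFinset v).exists_fin_embedding_mem (n := k) (by simpa using h)
  simp only [mem_neighborFinset] at hg
  refine ⟨⟨Fin.cons v g, Fin.cons_injective_of_injective ?_ g.injective⟩, ?_⟩
  · rintro ⟨i, hi⟩
    exact (hg i).ne hi.symm
  rw [starGraph_eq_starGraph k.succ_pos]
  intro a b hab
  cases a using Fin.cases <;> cases b using Fin.cases <;>
    simp_all [Fin.succ_ne_zero, (hg _).symm]

lemma contains_starGraph_iff (hm : 0 < m) :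
    Contains G (_root_.starGraph m) ↔ ∃ v, m - 1 ≤ G.degree v := by
  refine ⟨fun h => ?_, fun ⟨v, hv⟩ => contains_starGraph_of_le_degree hv⟩
  rw [starGraph_eq_starGraph hm] at h
  obtain ⟨v, hv⟩ := h.exists_le_degree ⟨0, hm⟩
  rw [degree_starGraph_center] at hv
  exact ⟨v, by simpa using hv⟩

lemma SimpleGraph.IsRegularOfDegree.not_contains_starGraph {d : ℕ} (hG : G.IsRegularOfDegree d)
    (hdm : d + 1 < m) : ¬Contains G (_root_.starGraph m) := by
  rw [contains_starGraph_iff (by omega)]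
  rintro ⟨v, hv⟩
  rw [hG v] at hv
  omega

lemma SimpleGraph.IsRegularOfDegree.even_card_mul {d : ℕ} (hG : G.IsRegularOfDegree d) :
    Even (Fintype.card V * d) := by
  have := G.sum_degrees_eq_twice_card_edges
  rw [sum_congr rfl fun v _ => hG v, sum_const, card_univ, smul_eq_mul] at this
  exact ⟨_, this.trans (two_mul _)⟩

end Star

lemma Finset.exists_subset_card_eq_le_card_sdiff {α : Type*} [DecidableEq α] {A B : Finset α}
    {n₁ n₂ : ℕ} (hA : n₁ ≤ #A) (hB : n₂ ≤ #B) (hAB : n₁ + n₂ ≤ #(A ∪ B)) :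
    ∃ W ⊆ B, #W = n₂ ∧ n₁ ≤ #(A \ W) := by
  -- `W` takes up as much of `B \ A` as it can.
  rcases le_total n₂ #(B \ A) with h | h
  · obtain ⟨W, hW, rfl⟩ := exists_subset_card_eq h
    have hAW : Disjoint A W := disjoint_of_subset_right hW disjoint_sdiff
    exact ⟨W, hW.trans sdiff_subset, rfl, by rwa [sdiff_eq_self_of_disjoint hAW]⟩
  · obtain ⟨W, hBAW, hWB, rfl⟩ := exists_subsuperset_card_eq sdiff_subset h hB
    refine ⟨W, hWB, rfl, ?_⟩
    have hcover : A ∪ B ⊆ A \ W ∪ W := fun x hx => by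
      have := @hBAW x
      simp only [mem_union, mem_sdiff] at hx this ⊢
      tauto
    have := (card_le_card hcover).trans (card_union_le _ _)
    omega

section DoubleStar

variable {n₁ n₂ : ℕ}

lemma contains_starGraph_doubleStar : Contains (doubleStar n₁ n₂) (_root_.starGraph (n₁ + 2)) :=
  ⟨Fin.castLEEmb (by omega), fun a b hab => by
    simp only [_root_.starGraph, doubleStar, fromRel_adj, ne_eq, Fin.ext_iff] at hab ⊢
    simp only [Fin.castLEEmb_apply, Fin.val_castLE]
    omega⟩

lemma contains_doubleStar_of_embeddings {H : SimpleGraph V} {u v : V} (huv : H.Adj u v)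
    (a : Fin n₁ ↪ V) (b : Fin n₂ ↪ V) (ha : ∀ i, H.Adj u (a i)) (hb : ∀ j, H.Adj v (b j))
    (hav : ∀ i, a i ≠ v) (hbu : ∀ j, b j ≠ u) (hab : ∀ i j, a i ≠ b j) :
    Contains H (doubleStar n₁ n₂) := by
  let f : Fin (n₁ + n₂ + 2) → V := Fin.cons u (Fin.cons v (Fin.append a b))
  have hleaf : ∀ k, Fin.append a b k ≠ u ∧ Fin.append a b k ≠ v := by
    intro k
    cases k using Fin.addCases with
    | left i => simpa using ⟨(ha i).ne', hav i⟩
    | right j => simpa using ⟨hbu j, (hb j).ne'⟩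
  have hinj : Function.Injective f := by
    refine Fin.cons_injective_of_injective ?_ (Fin.cons_injective_of_injective ?_ ?_)
    · rintro ⟨k, hk⟩
      cases k using Fin.cases with
      | zero => exact huv.ne' hk
      | succ k => exact (hleaf k).1 hk
    · exact fun ⟨k, hk⟩ => (hleaf k).2 hk
    · exact Fin.append_injective_iff.2 ⟨a.injective, b.injective, hab⟩
  have hedge : ∀ x y : Fin (n₁ + n₂ + 2),
      ((x : ℕ) = 0 ∧ (y : ℕ) = 1) ∨ ((x : ℕ) = 0 ∧ 2 ≤ (y : ℕ) ∧ (y : ℕ) ≤ n₁ + 1) ∨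
        ((x : ℕ) = 1 ∧ n₁ + 2 ≤ (y : ℕ)) → H.Adj (f x) (f y) := by
    intro x y hxy
    cases x using Fin.cases with
    | zero =>
      cases y using Fin.cases with
      | zero => simp at hxy
      | succ y =>
        cases y using Fin.cases with
        | zero => exact huv
        | succ y =>
          cases y using Fin.addCases with
          | left i => simpa [f] using ha i
          | right j => simp at hxy
    | succ x =>
      cases x using Fin.cases with
      | zero =>
        cases y using Fin.cases with
        | zero => simp at hxy
        | succ y =>
          cases y using Fin.cases with
          | zero => simp at hxy
          | succ y =>
            cases y using Fin.addCases with
            | left i => simp at hxy; omega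
            | right j => simpa [f] using hb j
      | succ x => simp at hxy
  refine ⟨⟨f, hinj⟩, fun x y hxy => ?_⟩
  obtain ⟨-, hxy | hyx⟩ := hxy
  · exact hedge x y hxy
  · exact (hedge y x hyx).symm

lemma contains_doubleStar_of_adj [Fintype V] [DecidableEq V] {H : SimpleGraph V}
    [DecidableRel H.Adj] {u v : V} (huv : H.Adj u v)
    (hA : n₁ ≤ #((H.neighborFinset u).erase v)) (hB : n₂ ≤ #((H.neighborFinset v).erase u))
    (hAB : n₁ + n₂ ≤ #((H.neighborFinset u).erase v ∪ (H.neighborFinset v).erase u)) :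
    Contains H (doubleStar n₁ n₂) := by
  obtain ⟨W, hWB, hW, hAW⟩ := exists_subset_card_eq_le_card_sdiff hA hB hAB
  obtain ⟨a, ha⟩ := exists_fin_embedding_mem hAW
  obtain ⟨b, hbW⟩ := exists_fin_embedding_mem hW.ge
  have hb := fun j => hWB (hbW j)
  simp only [mem_sdiff, mem_erase, mem_neighborFinset] at ha hb
  exact contains_doubleStar_of_embeddings huv a b (fun i => (ha i).1.2) (fun j => (hb j).2)
    (fun i => (ha i).1.1) (fun j => (hb j).1) fun i j h => (ha i).2 (h ▸ hbW j)

end DoubleStar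

section Circulant

open Pointwise

lemma degree_circulantGraph {G : Type*} [AddGroup G] [Fintype G] [DecidableEq G] (s : Finset G)
    (v : G) : (circulantGraph (s : Set G)).degree v = #((s ∪ -s).erase 0) := by
  rw [← card_neighborFinset_eq_degree]
  refine card_nbij' (fun w => w - v) (fun k => k + v) (fun w hw => ?_) (fun k hk => ?_)
    (fun w _ => sub_add_cancel w v) (fun k _ => add_sub_cancel_right k v)
  · simp only [coe_neighborFinset, mem_neighborSet, circulantGraph_adj, mem_coe] at hw
    simp only [mem_coe, mem_erase, mem_union, Finset.mem_neg', neg_sub, ne_eq, sub_eq_zero]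
    tauto
  · simp only [mem_coe, mem_erase, mem_union, Finset.mem_neg'] at hk
    have hsub : v - (k + v) = -k := by rw [sub_eq_add_neg, neg_add_rev, add_neg_cancel_left]
    simp only [coe_neighborFinset, mem_neighborSet, circulantGraph_adj, mem_coe,
      add_sub_cancel_right, hsub, right_eq_add]
    tauto

lemma intCast_injOn_Icc {N k : ℕ} (h2N : 2 * k < N) :
    Set.InjOn (Int.cast : ℤ → ZMod N) (Icc (-(k : ℤ)) k) := by
  intro a ha b hb hab
  simp only [coe_Icc, Set.mem_Icc] at ha hb
  rw [ZMod.intCast_eq_intCast_iff_dvd_sub] at hab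
  have := Int.eq_zero_of_abs_lt_dvd hab (by rw [abs_lt]; omega)
  omega

lemma exists_isRegularOfDegree_circulantGraph {N k : ℕ} [NeZero N] (h2N : 2 * k < N) :
    ∃ s : Finset (ZMod N), (circulantGraph (s : Set (ZMod N))).IsRegularOfDegree (2 * k) := by
  have hinj := intCast_injOn_Icc h2N
  set s : Finset (ZMod N) := ((Icc (-(k : ℤ)) k).erase 0).image (↑) with hs
  have hneg : -s = s := by
    ext x
    simp only [hs, mem_neg', mem_image, mem_erase, mem_Icc]
    constructor <;> rintro ⟨j, hj, hjx⟩ <;>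
      exact ⟨-j, by omega, by simp [hjx]⟩
  have h0 : 0 ∉ s := by
    simp only [hs, mem_image, mem_erase, not_exists, not_and]
    rintro j ⟨hj0, hj⟩ hj'
    exact hj0 (hinj hj (by simp) (by simpa using hj'))
  refine ⟨s, fun v => ?_⟩
  rw [degree_circulantGraph, hneg, union_self, erase_eq_of_notMem h0, hs,
    card_image_of_injOn (hinj.mono (coe_subset.2 (erase_subset _ _))),
    card_erase_of_mem (by simp), Int.card_Icc]
  omega

end Circulant

lemma mul_sub_lt_mul_sub_of_gt {m n₁ n₂ d : ℕ} (h2 : n₂ < m - 2) (h1 : m - 2 ≤ n₁)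
    (hgt : (n₁ : ℝ) > (m : ℝ) - 5 + n₂ + ((n₂ : ℝ) - 1) ^ 2 / ((m : ℝ) - 2 - n₂))
    (hd₁ : n₁ < d) (hd₂ : d ≤ n₁ + n₂) :
    d * (n₁ + n₂ - d) < (m - 2 + n₁ - d) * (n₁ + 1 - (m - 2 + n₁ - d)) := by
  have hm : ((n₂ + 3 : ℕ) : ℝ) ≤ m := by exact_mod_cast (by omega : n₂ + 3 ≤ m)
  push_cast at hm
  have hkey : ((n₂ : ℝ) - 1) ^ 2 < (n₁ - (m - 5 + n₂)) * (m - 2 - n₂) :=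
    (div_lt_iff₀ (by linarith)).1 (by linarith)
  rify [hd₂, (by omega : d ≤ m - 2 + n₁), (by omega : m - 2 + n₁ - d ≤ n₁ + 1),
    (by omega : 2 ≤ m)]
  -- With `t = d - n₁ ≥ 1`, the gap in the goal is the gap in `hkey`
  -- plus `(t - 1) (2 (m - 2 - n₂) + n₂ - 1) ≥ 0`.
  have ht : (n₁ : ℝ) + 1 ≤ d := by exact_mod_cast hd₁
  have ht' : (d : ℝ) ≤ n₁ + n₂ := by exact_mod_cast hd₂
  nlinarith [mul_nonneg (by linarith : (0 : ℝ) ≤ m - 2 - n₂) (by linarith : (0 : ℝ) ≤ d - n₁ - 1),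
    mul_nonneg (by linarith : (0 : ℝ) ≤ n₁ + n₂ - d) (by linarith : (0 : ℝ) ≤ d - n₁ - 1)]

section UpperBound

variable [Fintype V] [DecidableEq V] {H : SimpleGraph V} [DecidableRel H.Adj]

lemma degree_add_one_le_card_filter_adj_add_card {u w : V}
    (hw : w ∉ insert u (H.neighborFinset u)) :
    H.degree w + 1 ≤ #{v ∈ H.neighborFinset u | H.Adj v w} + #(insert u (H.neighborFinset u))ᶜ := by
  have hsub : H.neighborFinset w ⊆
      {v ∈ H.neighborFinset u | H.Adj v w} ∪ (insert u (H.neighborFinset u))ᶜ.erase w := by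
    intro x hx
    rw [mem_neighborFinset] at hx
    by_cases hxu : x ∈ H.neighborFinset u
    · exact mem_union_left _ (mem_filter.2 ⟨hxu, hx.symm⟩)
    · refine mem_union_right _ (mem_erase.2 ⟨hx.ne', ?_⟩)
      simp only [mem_compl, mem_insert, not_or]
      refine ⟨?_, hxu⟩
      rintro rfl
      exact hw (mem_insert_of_mem ((H.mem_neighborFinset _ _).2 hx.symm))
  have := (card_le_card hsub).trans (card_union_le _ _)
  rw [card_neighborFinset_eq_degree, card_erase_of_mem (mem_compl.2 hw)] at this
  have : 0 < #(insert u (H.neighborFinset u))ᶜ := card_pos.2 ⟨w, mem_compl.2 hw⟩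
  omega

variable {n₁ n₂ : ℕ}

lemma card_filter_adj_add_degree_le (hH : ¬Contains H (doubleStar n₁ n₂)) {u v : V}
    (huv : H.Adj u v) (hu : n₁ < H.degree u) (hv : n₂ < H.degree v) :
    #{w ∈ (insert u (H.neighborFinset u))ᶜ | H.Adj v w} + H.degree u ≤ n₁ + n₂ := by
  by_contra! h
  have hA : #((H.neighborFinset u).erase v) = H.degree u - 1 := by
    rw [card_erase_of_mem ((H.mem_neighborFinset _ _).2 huv), card_neighborFinset_eq_degree]
  have hB : #((H.neighborFinset v).erase u) = H.degree v - 1 := by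
    rw [card_erase_of_mem ((H.mem_neighborFinset _ _).2 huv.symm), card_neighborFinset_eq_degree]
  refine hH (contains_doubleStar_of_adj huv (by omega) (by omega) ?_)
  have hsub : {w ∈ (insert u (H.neighborFinset u))ᶜ | H.Adj v w} ⊆ (H.neighborFinset v).erase u :=
    fun w hw => by
      simp only [mem_filter, mem_compl, mem_insert, not_or] at hw
      exact mem_erase.2 ⟨hw.1.1, (H.mem_neighborFinset _ _).2 hw.2⟩
  have hdisj : Disjoint ((H.neighborFinset u).erase v)
      {w ∈ (insert u (H.neighborFinset u))ᶜ | H.Adj v w} :=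
    disjoint_left.2 fun w hw hw' => by
      simp only [mem_filter, mem_compl, mem_insert, not_or] at hw'
      exact hw'.1.2 (mem_of_mem_erase hw)
  have := card_le_card (union_subset_union_right (s := (H.neighborFinset u).erase v) hsub)
  rw [card_union_of_disjoint hdisj] at this
  omega

lemma card_compl_insert_neighborFinset_mul_le (hH : ¬Contains H (doubleStar n₁ n₂)) (hn : n₂ < n₁)
    (hδ : ∀ v, n₁ ≤ H.degree v) {u : V} (hu : n₁ < H.degree u) :
    #(insert u (H.neighborFinset u))ᶜ * (n₁ + 1 - #(insert u (H.neighborFinset u))ᶜ) ≤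
      H.degree u * (n₁ + n₂ - H.degree u) := by
  have := card_mul_le_card_mul (fun w v => H.Adj v w) (s := (insert u (H.neighborFinset u))ᶜ)
    (t := H.neighborFinset u) (m := n₁ + 1 - #(insert u (H.neighborFinset u))ᶜ)
    (n := n₁ + n₂ - H.degree u) (fun w hw => ?_) (fun v hv => ?_)
  · rwa [card_neighborFinset_eq_degree] at this
  · have := degree_add_one_le_card_filter_adj_add_card (mem_compl.1 hw)
    have := hδ w
    simp only [bipartiteAbove]
    omega
  · rw [mem_neighborFinset] at hv
    have := card_filter_adj_add_degree_le hH hv hu (by have := hδ v; omega)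
    simp only [bipartiteBelow]
    omega

end UpperBound

theorem contains_starGraph_or_compl_contains_doubleStar [Fintype V] {m n₁ n₂ : ℕ}
    (G : SimpleGraph V) (hV : Fintype.card V = m - 1 + n₁) (h2 : n₂ < m - 2) (h1 : m - 2 ≤ n₁)
    (hom : Odd m) (hon : Odd n₁)
    (hgt : (n₁ : ℝ) > (m : ℝ) - 5 + n₂ + ((n₂ : ℝ) - 1) ^ 2 / ((m : ℝ) - 2 - n₂)) :
    Contains G (_root_.starGraph m) ∨ Contains Gᶜ (doubleStar n₁ n₂) := by
  classical
  refine or_iff_not_imp_left.2 fun hG => by_contra fun hH => ?_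
  have hδ : ∀ v, n₁ ≤ Gᶜ.degree v := fun v => by
    have := G.degree_compl v
    have : G.degree v < m - 1 := not_le.1 fun h => hG (contains_starGraph_of_le_degree h)
    omega
  obtain ⟨u, hu⟩ : ∃ u, n₁ < Gᶜ.degree u := by
    by_contra! h
    have hodd : Odd (Fintype.card V * n₁) := by
      obtain ⟨a, rfl⟩ := hom
      obtain ⟨b, rfl⟩ := hon
      rw [hV]
      exact Odd.mul ⟨a + b, by omega⟩ ⟨b, rfl⟩
    exact Nat.not_even_iff_odd.2 hodd
      (IsRegularOfDegree.even_card_mul fun v => (h v).antisymm (hδ v))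
  obtain ⟨v, huv⟩ : ∃ v, Gᶜ.Adj u v := by
    simpa using (Gᶜ.degree_pos_iff_exists_adj u).1 (by omega)
  have hdeg := card_filter_adj_add_degree_le hH huv hu (by have := hδ v; omega)
  have hcount := card_compl_insert_neighborFinset_mul_le hH (by omega) hδ hu
  rw [card_compl, card_insert_of_notMem (notMem_neighborFinset_self _ _),
    card_neighborFinset_eq_degree, hV,
    show m - 1 + n₁ - (Gᶜ.degree u + 1) = m - 2 + n₁ - Gᶜ.degree u by omega] at hcount
  exact (mul_sub_lt_mul_sub_of_gt h2 h1 hgt hu (by omega)).not_ge hcount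

theorem stmt11_general (m n₁ n₂ : ℕ) (h2 : n₂ < m - 2) (h1 : m - 2 ≤ n₁)
    (ho : Odd (m * n₁))
    (hgt : (n₁ : ℝ) > (m : ℝ) - 5 + n₂ + ((n₂ : ℝ) - 1) ^ 2 / ((m : ℝ) - 2 - n₂)) :
    ramseyNumber (_root_.starGraph m) (doubleStar n₁ n₂) = m - 1 + n₁ := by
  obtain ⟨⟨k, hm⟩, hon⟩ := Nat.odd_mul.1 ho
  have : NeZero (m - 2 + n₁) := ⟨by omega⟩
  obtain ⟨s, hs⟩ := exists_isRegularOfDegree_circulantGraph (N := m - 2 + n₁) (k := k - 1)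
    (by omega)
  have hcard := ZMod.card (m - 2 + n₁)
  refine ramseyNumber_eq_of_witness _ (by omega) (hs.not_contains_starGraph (by omega)) ?_
    fun G => contains_starGraph_or_compl_contains_doubleStar G (Fintype.card_fin _) h2 h1
      ⟨k, hm⟩ hon hgt
  intro hc
  refine hs.compl.not_contains_starGraph ?_ (hc.trans contains_starGraph_doubleStar)
  omega

theorem stmt11 (m n₁ n₂ : ℕ) (h0 : 0 < n₂) (h2 : n₂ < m - 2) (h1 : m - 2 ≤ n₁)
    (ho : Odd (m * n₁))
    (hgt : (n₁ : ℝ) > (m : ℝ) - 5 + n₂ + ((n₂ : ℝ) - 1) ^ 2 / ((m : ℝ) - 2 - n₂)) :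
    ramseyNumber (_root_.starGraph m) (doubleStar n₁ n₂) = m - 1 + n₁ :=
  stmt11_general m n₁ n₂ h2 h1 ho hgt
end
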